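/- Let λ ⊢ n and let ≤_{λ,b} be the recursively defined partial order on SYT(λ). Then: (i) for b = 00⋯0, S ≤_b T if and only if the sequence (ε_1(S),…,ε_n(S)) precedes (ε_1(T),…,ε_n(T)) in reverse lexicographic order (comparing the last entries first); (ii) for b = 11⋯1, S ≤_b T if and only if (ε_1(ev(S)),…,ε_n(ev(S))) precedes (ε_1(ev(T)),…,ε_n(ev(T))) in reverse lexicographic order. -/

import Mathlib

/-!
Common combinatorial background: standard Young tableaux encoded as chains of
Young diagrams, the box-removal map `d`, box-addition `up`, the row statistic
`ε_k`, binary sequences (as functions `ℕ → Bool`), the generalised bijections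
`phi` and partial orders `leB` of Definition 4.1, and interval parabolic
subgroups of symmetric groups.
-/

open scoped BigOperators

/-- A standard Young tableau with `n` boxes, encoded as the chain of Young
diagrams `∅ = chain 0 ⊂ chain 1 ⊂ ⋯ ⊂ chain n`, where `chain k` is the shape
occupied by the entries `1, …, k`. -/
structure SYT (n : ℕ) where
  chain : ℕ → YoungDiagram
  chain_zero : chain 0 = ⊥
  chain_mono : ∀ k, chain k ≤ chain (k + 1)
  chain_card : ∀ k, k ≤ n → (chain k).card = k
  chain_stable : ∀ k, n ≤ k → chain k = chain n

namespace SYT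

/-- The shape of a standard Young tableau. -/
def shape {n : ℕ} (T : SYT n) : YoungDiagram := T.chain n

lemma chain_monotone {n : ℕ} (T : SYT n) : Monotone T.chain :=
  monotone_nat_of_le_succ T.chain_mono

/-- `ε_k(T)`: the (0-indexed) row of `T` containing the entry `k`. -/
noncomputable def row {n : ℕ} (T : SYT n) (k : ℕ) : ℕ :=
  sInf {i | ∃ j, (i, j) ∈ T.chain k ∧ (i, j) ∉ T.chain (k - 1)}

/-- `d(T)`: the tableau obtained from `T` by removing the box containing the
largest entry. -/
def d {n : ℕ} (T : SYT (n + 1)) : SYT n where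
  chain k := T.chain (min k n)
  chain_zero := by simpa using T.chain_zero
  chain_mono k := T.chain_monotone (by omega)
  chain_card k hk := by
    show (T.chain (min k n)).card = k
    rw [min_eq_left hk]; exact T.chain_card k (by omega)
  chain_stable k hk := by
    show T.chain (min k n) = T.chain (min n n)
    rw [min_eq_right hk, min_self]

/-- The one-row Young diagram with `m` cells. -/
def rowDiagram (m : ℕ) : YoungDiagram where
  cells := (Finset.range m).map ⟨fun j => (0, j), fun a b h => by simpa using h⟩
  isLowerSet := by
    rintro ⟨x1, x2⟩ ⟨y1, y2⟩ ⟨h1, h2⟩ hx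
    simp only [Finset.coe_map, Function.Embedding.coeFn_mk, Set.mem_image,
      Finset.mem_coe, Finset.mem_range, Prod.mk.injEq] at hx ⊢
    obtain ⟨j, hj, rfl, rfl⟩ := hx
    exact ⟨y2, by simp only at h2; omega, Prod.ext (show 0 = y1 by simp only at h1; omega) rfl⟩

lemma rowDiagram_card (m : ℕ) : (rowDiagram m).card = m := by
  simp [rowDiagram, YoungDiagram.card]

lemma rowDiagram_mono {a b : ℕ} (h : a ≤ b) : rowDiagram a ≤ rowDiagram b := by
  intro x hx
  simp only [rowDiagram, ← YoungDiagram.mem_cells, Finset.mem_coe, Finset.mem_map,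
    Function.Embedding.coeFn_mk, Finset.mem_range, SetLike.mem_coe] at hx ⊢
  obtain ⟨j, hj, rfl⟩ := hx
  exact ⟨j, by omega, rfl⟩

lemma rowDiagram_zero : rowDiagram 0 = ⊥ := by
  ext x
  simp [rowDiagram, YoungDiagram.mem_mk]

/-- The one-row standard Young tableau with `n` boxes. -/
def rowSYT (n : ℕ) : SYT n where
  chain k := rowDiagram (min k n)
  chain_zero := by simpa using rowDiagram_zero
  chain_mono k := rowDiagram_mono (by omega)
  chain_card k hk := by
    show (rowDiagram (min k n)).card = k
    rw [min_eq_left hk]; exact rowDiagram_card k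
  chain_stable k hk := by
    show rowDiagram (min k n) = rowDiagram (min n n)
    rw [min_eq_right hk, min_self]

open Classical in
/-- `S⁺`: add a box containing the entry `n + 1` to `S` so that the resulting
tableau has shape `μ` (junk value if this is impossible). -/
noncomputable def up {n : ℕ} (S : SYT n) (μ : YoungDiagram) : SYT (n + 1) :=
  if h : S.shape ≤ μ ∧ μ.card = n + 1 then
    { chain := fun k => if k ≤ n then S.chain k else μ
      chain_zero := by simpa using S.chain_zero
      chain_mono := by
        intro k
        show (if k ≤ n then S.chain k else μ) ≤ (if k + 1 ≤ n then S.chain (k + 1) else μ)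
        rcases le_or_gt (k + 1) n with h2 | h2
        · rw [if_pos (by omega : k ≤ n), if_pos h2]
          exact S.chain_mono k
        · rw [if_neg (by omega : ¬ k + 1 ≤ n)]
          by_cases h1 : k ≤ n
          · rw [if_pos h1]
            have hkn : k = n := by omega
            subst hkn
            exact h.1
          · rw [if_neg h1]
      chain_card := by
        intro k hk
        show (if k ≤ n then S.chain k else μ).card = k
        by_cases h1 : k ≤ n
        · rw [if_pos h1]; exact S.chain_card k h1
        · rw [if_neg h1]
          have : k = n + 1 := by omega
          rw [h.2, this]
      chain_stable := by
        intro k hk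
        show (if k ≤ n then S.chain k else μ) = (if n + 1 ≤ n then S.chain (n + 1) else μ)
        rw [if_neg (by omega : ¬ k ≤ n), if_neg (by omega : ¬ n + 1 ≤ n)] }
  else rowSYT (n + 1)

end SYT

/-- Complementation of a binary sequence (`ol` in the paper, swapping `0` and `1`). -/
def olB (b : ℕ → Bool) : ℕ → Bool := fun i => !b i

/-- Truncation `b ↦ b_† = b₂b₃⋯` of a binary sequence. -/
def shiftB (b : ℕ → Bool) : ℕ → Bool := fun i => b (i + 1)

/-- The generalised bijection `φ_{λ,b}` of Definition 4.1(1), defined (for an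
arbitrary shape-preserving family of evacuation involutions `ev`) by
`φ_{λ,b}(T) = (φ_{μ,b_†}(d T))⁺` if `b₁ = 0` and
`φ_{λ,b}(T) = (φ_{μ,ol(b_†)}(d (ev T)))⁺` if `b₁ = 1`. -/
noncomputable def phiB (ev : ∀ m, SYT m → SYT m) : ∀ n : ℕ, (ℕ → Bool) → SYT n → SYT n
  | 0, _, T => T
  | n + 1, b, T =>
    if b 0 then (phiB ev n (olB (shiftB b)) ((ev (n + 1) T).d)).up T.shape
    else (phiB ev n (shiftB b) T.d).up T.shape

/-- The generalised partial order `≤_{λ,b}` of Definition 4.1(2), defined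
recursively (relative to a family of evacuation involutions `ev`). -/
noncomputable def leB (ev : ∀ m, SYT m → SYT m) : ∀ n : ℕ, (ℕ → Bool) → SYT n → SYT n → Prop
  | 0, _, _, _ => True
  | n + 1, b, S, T =>
    if b 0 then
      (ev (n + 1) S).row (n + 1) < (ev (n + 1) T).row (n + 1) ∨
        ((ev (n + 1) S).row (n + 1) = (ev (n + 1) T).row (n + 1) ∧
          leB ev n (olB (shiftB b)) ((ev (n + 1) S).d) ((ev (n + 1) T).d))
    else
      S.row (n + 1) < T.row (n + 1) ∨
        (S.row (n + 1) = T.row (n + 1) ∧ leB ev n (shiftB b) S.d T.d)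

/-- The strict order `<_{λ,b}`. -/
noncomputable def ltB (ev : ∀ m, SYT m → SYT m) (n : ℕ) (b : ℕ → Bool) (S T : SYT n) : Prop :=
  leB ev n b S T ∧ S ≠ T

/-- The standard parabolic subgroup `S_{[a,b]}` of `S_n` consisting of the
permutations fixing every point outside the (1-indexed) interval `[a,b]`. -/
def intervalSubgroup (n a b : ℕ) : Subgroup (Equiv.Perm (Fin n)) where
  carrier := {σ | ∀ i : Fin n, (i.val + 1 < a ∨ b < i.val + 1) → σ i = i}
  one_mem' := fun _ _ => rfl
  mul_mem' := by
    intro σ τ hσ hτ i hi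
    have : (σ * τ) i = σ (τ i) := rfl
    rw [this, hτ i hi, hσ i hi]
  inv_mem' := by
    intro σ hσ i hi
    conv_lhs => rw [← hσ i hi]
    exact σ.symm_apply_apply i

/-- The lower endpoints of the intervals in the multiplicity-free chain
labelled by a binary sequence `b` (0-indexed: `chainLo b (m-1)` is the lower
endpoint of the interval `I_m`); `b m = true` means the smallest element is
removed at the `m`-th step. -/
def chainLo (b : ℕ → Bool) : ℕ → ℕ
  | 0 => 1
  | m + 1 => chainLo b m + (if b m then 1 else 0)

/-- The upper endpoints of the intervals in the multiplicity-free chain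
labelled by a binary sequence `b`; `b m = false` means the largest element is
removed at the `m`-th step. -/
def chainHi (n : ℕ) (b : ℕ → Bool) : ℕ → ℕ
  | 0 => n
  | m + 1 => chainHi n b m - (if b m then 0 else 1)
/-- `f` precedes `g` in the reverse lexicographic order on the window
`[1, n]` (comparing the last entries first). -/
def RevLexLe (n : ℕ) (f g : ℕ → ℕ) : Prop :=
  (∀ k, 1 ≤ k → k ≤ n → f k = g k) ∨
    ∃ k, 1 ≤ k ∧ k ≤ n ∧ f k < g k ∧ ∀ j, k < j → j ≤ n → f j = g j

/-!
Removing the largest entry does not move the others, so `ε_k(d T) = ε_k(T)` for `k ≤ n`.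
The reverse lexicographic order first compares `ε_n` and then the remaining entries, which is
exactly the recursion defining `≤_{λ,0⋯0}`. For `b = 1⋯1` the first step of the recursion
passes to `ev` and continues with `ol(b_†) = 0⋯0`, which reduces (ii) to (i).
-/

lemma SYT.row_d {n : ℕ} (T : SYT (n + 1)) {k : ℕ} (hk : k ≤ n) : T.d.row k = T.row k := by
  have hchain : ∀ i ≤ n, T.d.chain i = T.chain i := fun i hi => congrArg T.chain (min_eq_left hi)
  unfold SYT.row
  rw [hchain k hk, hchain (k - 1) (by omega)]

lemma revLexLe_zero (f g : ℕ → ℕ) : RevLexLe 0 f g :=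
  Or.inl fun _ h1 h2 => absurd (h1.trans h2) (by omega)

lemma revLexLe_succ (n : ℕ) (f g : ℕ → ℕ) :
    RevLexLe (n + 1) f g ↔
      f (n + 1) < g (n + 1) ∨ (f (n + 1) = g (n + 1) ∧ RevLexLe n f g) := by
  constructor
  · rintro (heq | ⟨k, hk1, hkn, hlt, hafter⟩)
    · exact Or.inr ⟨heq (n + 1) (by omega) le_rfl, Or.inl fun j h1 h2 => heq j h1 (by omega)⟩
    · rcases hkn.eq_or_lt with rfl | hk
      · exact Or.inl hlt
      · exact Or.inr ⟨hafter (n + 1) hk le_rfl,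
          Or.inr ⟨k, hk1, by omega, hlt, fun j h1 h2 => hafter j h1 (by omega)⟩⟩
  · rintro (hlast | ⟨hlast, heq | ⟨k, hk1, hkn, hlt, hafter⟩⟩)
    · exact Or.inr ⟨n + 1, by omega, le_rfl, hlast, fun j h1 h2 => by omega⟩
    · refine Or.inl fun j h1 h2 => ?_
      rcases h2.eq_or_lt with rfl | hj
      · exact hlast
      · exact heq j h1 (by omega)
    · refine Or.inr ⟨k, hk1, by omega, hlt, fun j h1 h2 => ?_⟩
      rcases h2.eq_or_lt with rfl | hj
      · exact hlast
      · exact hafter j h1 (by omega)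

lemma revLexLe_congr {n : ℕ} {f f' g g' : ℕ → ℕ}
    (hf : Set.EqOn f f' (Set.Icc 1 n)) (hg : Set.EqOn g g' (Set.Icc 1 n)) :
    RevLexLe n f g ↔ RevLexLe n f' g' := by
  induction n with
  | zero => exact iff_of_true (revLexLe_zero f g) (revLexLe_zero f' g')
  | succ n ih =>
    have hlast : n + 1 ∈ Set.Icc 1 (n + 1) := ⟨by omega, le_rfl⟩
    have hsub : Set.Icc 1 n ⊆ Set.Icc 1 (n + 1) := Set.Icc_subset_Icc_right (by omega)
    rw [revLexLe_succ, revLexLe_succ, hf hlast, hg hlast, ih (hf.mono hsub) (hg.mono hsub)]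

lemma revLexLe_row_d_iff {n : ℕ} (S T : SYT (n + 1)) :
    RevLexLe n S.d.row T.d.row ↔ RevLexLe n S.row T.row :=
  revLexLe_congr (fun _ hk => S.row_d hk.2) (fun _ hk => T.row_d hk.2)

section

variable (ev : ∀ m, SYT m → SYT m)

lemma leB_succ_const_false {n : ℕ} (S T : SYT (n + 1)) :
    leB ev (n + 1) (fun _ => false) S T ↔
      S.row (n + 1) < T.row (n + 1) ∨
        (S.row (n + 1) = T.row (n + 1) ∧ leB ev n (fun _ => false) S.d T.d) :=
  Iff.rfl

lemma leB_succ_const_true {n : ℕ} (S T : SYT (n + 1)) :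
    leB ev (n + 1) (fun _ => true) S T ↔ leB ev (n + 1) (fun _ => false) (ev _ S) (ev _ T) :=
  Iff.rfl

lemma leB_const_false_iff_revLexLe (n : ℕ) (S T : SYT n) :
    leB ev n (fun _ => false) S T ↔ RevLexLe n S.row T.row := by
  induction n with
  | zero => exact iff_of_true trivial (revLexLe_zero _ _)
  | succ n ih => rw [leB_succ_const_false, ih, revLexLe_row_d_iff, revLexLe_succ]

lemma leB_const_true_iff_revLexLe (n : ℕ) (S T : SYT n) :
    leB ev n (fun _ => true) S T ↔ RevLexLe n (ev n S).row (ev n T).row := by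
  cases n with
  | zero => exact iff_of_true trivial (revLexLe_zero _ _)
  | succ n => rw [leB_succ_const_true, leB_const_false_iff_revLexLe]

end

theorem leB_special_cases_general
    (n : ℕ) (lam : YoungDiagram)
    (ev : ∀ m, SYT m → SYT m) :
    (∀ S T : SYT n, S.shape = lam → T.shape = lam →
      (leB ev n (fun _ => false) S T ↔ RevLexLe n S.row T.row)) ∧
    (∀ S T : SYT n, S.shape = lam → T.shape = lam →
      (leB ev n (fun _ => true) S T ↔
        RevLexLe n (ev n S).row (ev n T).row)) :=
  ⟨fun S T _ _ => leB_const_false_iff_revLexLe ev n S T,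
    fun S T _ _ => leB_const_true_iff_revLexLe ev n S T⟩

theorem leB_special_cases
    (n : ℕ) (lam : YoungDiagram) (hlam : lam.card = n)
    (ev : ∀ m, SYT m → SYT m)
    (hev_shape : ∀ m (T : SYT m), (ev m T).shape = T.shape)
    (hev_invol : ∀ m, Function.Involutive (ev m)) :
    (∀ S T : SYT n, S.shape = lam → T.shape = lam →
      (leB ev n (fun _ => false) S T ↔ RevLexLe n S.row T.row)) ∧
    (∀ S T : SYT n, S.shape = lam → T.shape = lam →
      (leB ev n (fun _ => true) S T ↔
        RevLexLe n (ev n S).row (ev n T).row)) :=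
  leB_special_cases_general n lam ev
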